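/- arXiv:2410.09282 — 10 statements merged into one kernel-verified Lean document; each statement's English description precedes it below -/
import Mathlib

section
/- For every φ > 0 and every real n ≥ 0, the function L ↦ M(n,L;φ) is convex on [0,∞). Consequently, for every c > 0 the sublevel set {L ∈ [0,∞) : M(n,L;φ) ≤ c} is a convex subset of ℝ (an interval). -/
/-!
`L ↦ M(n,L;φ)` is a positive multiple of `x ↦ x ^ (-(φ+n)) * exp x` evaluated at `x = φ + L`.
That function is log-convex on `(0, ∞)`: its logarithm `-(φ+n) log x + x` is convex because
`log` is concave and `φ + n ≥ 0`. A log-convex function is convex, and translation and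
positive scaling preserve convexity.
-/

/-- `M(n, L; φ) = φ^φ (φ+L)^{-(φ+n)} (Γ(φ+n)/Γ(φ)) e^L`. -/
noncomputable def M (n L φ : ℝ) : ℝ :=
  φ ^ φ * (φ + L) ^ (-(φ + n)) * (Real.Gamma (φ + n) / Real.Gamma φ) * Real.exp L

open Set Real

theorem ConvexOn.exp_comp {E : Type*} [AddCommGroup E] [Module ℝ E] {s : Set E} {g : E → ℝ}
    (hg : ConvexOn ℝ s g) : ConvexOn ℝ s fun x => exp (g x) :=
  ⟨hg.1, fun _ hx _ hy _ _ ha hb hab =>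
    (exp_le_exp.2 (hg.2 hx hy ha hb hab)).trans (convexOn_exp.2 trivial trivial ha hb hab)⟩

theorem convexOn_rpow_neg_mul_exp {p : ℝ} (hp : 0 ≤ p) :
    ConvexOn ℝ (Ioi 0) fun x : ℝ => x ^ (-p) * exp x := by
  have hlog : ConvexOn ℝ (Ioi 0) fun x : ℝ => p • -log x + x :=
    (strictConcaveOn_log_Ioi.concaveOn.neg.smul hp).add (convexOn_id (convex_Ioi 0))
  refine hlog.exp_comp.congr fun x (hx : 0 < x) => ?_
  simp only [smul_eq_mul, exp_add, rpow_def_of_pos hx]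
  ring_nf

theorem M_eq_mul_rpow_mul_exp (n L φ : ℝ) :
    M n L φ = φ ^ φ * (Gamma (φ + n) / Gamma φ) * exp (-φ) *
      ((φ + L) ^ (-(φ + n)) * exp (φ + L)) := by
  have hexp : exp L = exp (-φ) * exp (φ + L) := by rw [← exp_add, neg_add_cancel_left]
  rw [M, hexp]
  ring

theorem convexOn_M {n φ : ℝ} (hφ : 0 < φ) (hn : 0 ≤ n) :
    ConvexOn ℝ (Ici 0) fun L => M n L φ := by
  have hshift : ConvexOn ℝ (Ici 0) fun L => (φ + L) ^ (-(φ + n)) * exp (φ + L) :=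
    ((convexOn_rpow_neg_mul_exp (by linarith)).translate_right φ).subset
      (fun L (hL : 0 ≤ L) => show 0 < φ + L by linarith) (convex_Ici 0)
  have hC : 0 ≤ φ ^ φ * (Gamma (φ + n) / Gamma φ) * exp (-φ) := by
    have := Gamma_pos_of_pos (show 0 < φ + n by linarith)
    have := Gamma_pos_of_pos hφ
    positivity
  exact (hshift.smul hC).congr fun L _ => (M_eq_mul_rpow_mul_exp n L φ).symm

/-- For every `φ > 0` and `n ≥ 0`, `L ↦ M(n,L;φ)` is convex on `[0,∞)`, and consequently
every sublevel set `{L ∈ [0,∞) : M(n,L;φ) ≤ c}` with `c > 0` is a convex subset of `ℝ`. -/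
theorem M_convexOn_and_sublevel_convex (φ n : ℝ) (hφ : 0 < φ) (hn : 0 ≤ n) :
    ConvexOn ℝ (Set.Ici (0 : ℝ)) (fun L => M n L φ) ∧
      ∀ c : ℝ, 0 < c → Convex ℝ {L : ℝ | 0 ≤ L ∧ M n L φ ≤ c} :=
  ⟨convexOn_M hφ hn, fun c _ => (convexOn_M hφ hn).convex_le c⟩
end

section
/- For every φ > 0 and all reals n_A ≥ 0, n_B ≥ 0, letting L̂ = (n_A + n_B)/2, the product L ↦ M(n_A,L;φ) · M(n_B,L;φ) on [0,∞) attains its minimum at L = L̂; that is, M(n_A,L̂;φ) · M(n_B,L̂;φ) ≤ M(n_A,L;φ) · M(n_B,L;φ) for all L ≥ 0. -/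
open Real

theorem div_rpow_neg_mul_exp_le {a c x : ℝ} (ha : 0 < a) (hc : 0 < c) (hx : 0 < x) :
    (a / c) ^ (-a) * exp a ≤ x ^ (-a) * exp (c * x) := by
  have hlog : log x - log (a / c) ≤ c * x / a - 1 := by
    rw [← log_div hx.ne' (div_pos ha hc).ne', div_div_eq_mul_div, mul_comm x c]
    exact log_le_sub_one_of_pos (by positivity)
  have hscaled : a * (log x - log (a / c)) ≤ c * x - a := by
    calc a * (log x - log (a / c)) ≤ a * (c * x / a - 1) := mul_le_mul_of_nonneg_left hlog ha.le
      _ = c * x - a := by field_simp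
  rw [rpow_def_of_pos (by positivity), rpow_def_of_pos hx, ← exp_add, ← exp_add, exp_le_exp]
  linarith

theorem M_mul_M_eq {nA nB L φ : ℝ} (hx : 0 < φ + L) :
    M nA L φ * M nB L φ =
      φ ^ φ * φ ^ φ * (Gamma (φ + nA) / Gamma φ) * (Gamma (φ + nB) / Gamma φ) * exp (-(2 * φ)) *
        ((φ + L) ^ (-(2 * φ + nA + nB)) * exp (2 * (φ + L))) := by
  have hpow : (φ + L) ^ (-(2 * φ + nA + nB)) = (φ + L) ^ (-(φ + nA)) * (φ + L) ^ (-(φ + nB)) := by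
    rw [← rpow_add hx]; ring_nf
  have hexp : exp (-(2 * φ)) * exp (2 * (φ + L)) = exp L * exp L := by
    rw [← exp_add, ← exp_add]; ring_nf
  unfold M
  linear_combination (φ ^ φ * φ ^ φ * (Gamma (φ + nA) / Gamma φ) * (Gamma (φ + nB) / Gamma φ)) *
    (-(φ + L) ^ (-(2 * φ + nA + nB)) * hexp - exp L * exp L * hpow)

/-- For every `φ > 0` and `n_A, n_B ≥ 0`, the product `L ↦ M(n_A,L;φ)·M(n_B,L;φ)` on `[0,∞)`
attains its minimum at the pooled estimate `L̂ = (n_A + n_B)/2`. -/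
theorem M_product_min_at_pooled (φ nA nB : ℝ) (hφ : 0 < φ) (hA : 0 ≤ nA) (hB : 0 ≤ nB) :
    ∀ L : ℝ, 0 ≤ L →
      M nA ((nA + nB) / 2) φ * M nB ((nA + nB) / 2) φ ≤ M nA L φ * M nB L φ := by
  intro L hL
  rw [M_mul_M_eq (by positivity), M_mul_M_eq (by positivity)]
  refine mul_le_mul_of_nonneg_left ?_ ?_
  · rw [show φ + (nA + nB) / 2 = (2 * φ + nA + nB) / 2 by ring, mul_div_cancel₀ _ two_ne_zero]
    exact div_rpow_neg_mul_exp_le (by positivity) two_pos (by positivity)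
  · have := Gamma_pos_of_pos (by positivity : 0 < φ + nA)
    have := Gamma_pos_of_pos (by positivity : 0 < φ + nB)
    positivity
end

section
/- Fix φ > 0 and reals n_A ≥ 0, n_B ≥ 0, and set E = M(n_A,L̂;φ) · M(n_B,L̂;φ) with L̂ = (n_A + n_B)/2. Then the infimum of the set {α > 0 : for all L ≥ 0, M(n_A,L;φ) · M(n_B,L;φ) > α⁻¹} equals E⁻¹. In words: the smallest significance level α at which the diagonal null set is excluded from the 1−α confidence set {(L_A,L_B) ∈ [0,∞)² : M(n_A,L_A;φ)M(n_B,L_B;φ) ≤ α⁻¹} is exactly the reciprocal of the e-value E, so the sequential p-value equals 1/E. -/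
lemma core_ineq (φ a x : ℝ) (ha : 0 < a) (hx : 0 < x) :
    a ^ (-(2*a)) * Real.exp (2*(a-φ)) ≤ x ^ (-(2*a)) * Real.exp (2*(x-φ)) := by
  rw [Real.rpow_def_of_pos ha, Real.rpow_def_of_pos hx, ← Real.exp_add, ← Real.exp_add,
    Real.exp_le_exp]
  have h := Real.log_le_sub_one_of_pos (div_pos hx ha)
  rw [Real.log_div hx.ne' ha.ne'] at h
  have h2 : a * (Real.log x - Real.log a) ≤ x - a := by
    have := mul_le_mul_of_nonneg_left h ha.le
    calc a * (Real.log x - Real.log a) ≤ a * (x / a - 1) := this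
      _ = x - a := by field_simp
  nlinarith

lemma prod_form (φ n m L : ℝ) (h : 0 < φ + L) :
    M n L φ * M m L φ =
      (φ ^ φ * (Real.Gamma (φ+n) / Real.Gamma φ)) *
        (φ ^ φ * (Real.Gamma (φ+m) / Real.Gamma φ)) *
        ((φ + L) ^ (-(2*φ+n+m)) * Real.exp (2*L)) := by
  unfold M
  rw [show -(2*φ+n+m) = (-(φ+n)) + (-(φ+m)) by ring, Real.rpow_add h,
    show (2:ℝ)*L = L + L by ring, Real.exp_add]
  ring

lemma M_pos (φ n L : ℝ) (hφ : 0 < φ) (hn : 0 ≤ n) (hL : 0 ≤ L) : 0 < M n L φ := by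
  unfold M
  have h1 : 0 < φ + n := by linarith
  have h2 : 0 < φ + L := by linarith
  exact mul_pos (mul_pos (mul_pos (Real.rpow_pos_of_pos hφ _) (Real.rpow_pos_of_pos h2 _))
    (div_pos (Real.Gamma_pos_of_pos h1) (Real.Gamma_pos_of_pos hφ))) (Real.exp_pos _)

lemma prod_ge (φ nA nB L : ℝ) (hφ : 0 < φ) (hA : 0 ≤ nA) (hB : 0 ≤ nB) (hL : 0 ≤ L) :
    M nA ((nA + nB) / 2) φ * M nB ((nA + nB) / 2) φ ≤ M nA L φ * M nB L φ := by
  have hh : (0:ℝ) ≤ (nA + nB) / 2 := by linarith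
  rw [prod_form φ nA nB _ (by linarith), prod_form φ nA nB L (by linarith)]
  apply mul_le_mul_of_nonneg_left _ (by positivity)
  have h := core_ineq φ (φ + (nA + nB)/2) (φ + L) (by linarith) (by linarith)
  rw [show -(2*φ+nA+nB) = -(2*(φ+(nA+nB)/2)) by ring,
    show 2*((nA+nB)/2) = 2*((φ+(nA+nB)/2) - φ) by ring,
    show 2*L = 2*((φ+L)-φ) by ring]
  exact h

/-- With `E = M(n_A,L̂;φ)·M(n_B,L̂;φ)` and `L̂ = (n_A+n_B)/2`, the infimum of the set of
levels `α > 0` at which the diagonal null is excluded from the `1-α` confidence set,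
i.e. `{α > 0 : ∀ L ≥ 0, M(n_A,L;φ)·M(n_B,L;φ) > α⁻¹}`, equals `E⁻¹`: the sequential
p-value is exactly `1/E`. -/
theorem p_value_eq_inv_e_value (φ nA nB : ℝ) (hφ : 0 < φ) (hA : 0 ≤ nA) (hB : 0 ≤ nB) :
    sInf {α : ℝ | 0 < α ∧ ∀ L : ℝ, 0 ≤ L → M nA L φ * M nB L φ > α⁻¹}
      = (M nA ((nA + nB) / 2) φ * M nB ((nA + nB) / 2) φ)⁻¹ := by
  set E := M nA ((nA + nB) / 2) φ * M nB ((nA + nB) / 2) φ with hEdef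
  have hh : (0:ℝ) ≤ (nA + nB) / 2 := by linarith
  have hE : 0 < E := mul_pos (M_pos φ nA _ hφ hA hh) (M_pos φ nB _ hφ hB hh)
  have hset : {α : ℝ | 0 < α ∧ ∀ L : ℝ, 0 ≤ L → M nA L φ * M nB L φ > α⁻¹}
      = Set.Ioi E⁻¹ := by
    ext α
    simp only [Set.mem_setOf_eq, Set.mem_Ioi]
    constructor
    · rintro ⟨hα, h⟩
      have h1 : α⁻¹ < E := h _ hh
      have h2 : 0 < α⁻¹ := inv_pos.mpr hα
      nlinarith [mul_pos hα hE, mul_inv_cancel₀ hα.ne', mul_inv_cancel₀ hE.ne']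
    · intro h
      have hα : 0 < α := lt_trans (inv_pos.mpr hE) h
      refine ⟨hα, fun L hL => ?_⟩
      have h1 : α⁻¹ < E := by
        nlinarith [mul_pos hα hE, mul_inv_cancel₀ hα.ne', mul_inv_cancel₀ hE.ne']
      exact lt_of_lt_of_le h1 (prod_ge φ nA nB L hφ hA hB hL)
  rw [hset, csInf_Ioi]
end

section
/- Let (Ω, F, P) be a probability space and let (X_i)_{i∈ℕ} be independent ℕ-valued random variables such that X_i has the Poisson distribution with mean Λ_i, where (Λ_i) are nonnegative reals with Λ_i ≤ λ_max for all i and (1/n)·Σ_{i<n} Λ_i → λ̄ as n → ∞. Then (1/n)·Σ_{i<n} X_i → λ̄ almost surely. -/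
open MeasureTheory ProbabilityTheory Filter Real Topology
open scoped NNReal ENNReal Nat

/-!
A Poisson variable of mean `Λ` has mean and variance `Λ`, so by independence the partial sums
`S n = X 0 + ⋯ + X (n - 1)` satisfy `𝔼[S n] = Λ 0 + ⋯ + Λ (n - 1)` and `Var[S n] ≤ n λ_max`.
Along a geometric subsequence `n_k = ⌊c ^ k⌋₊` with `c > 1` the variances of `S n_k / n_k` are
summable, so the sum of the squared deviations `(S n_k - 𝔼[S n_k])² / n_k²` has finite
expectation, hence is finite almost surely, and `S n_k / n_k → λ̄` almost surely. Because `S n` is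
nondecreasing in `n`, convergence along `⌊c ^ k⌋₊` for ratios `c ↓ 1` forces `S n / n → λ̄`.
-/

lemma summable_inv_nat_floor_pow {c : ℝ} (hc : 1 < c) :
    Summable fun k : ℕ ↦ ((⌊c ^ k⌋₊ : ℕ) : ℝ)⁻¹ := by
  have hgeom : Summable fun k : ℕ ↦ 2 * c⁻¹ ^ k :=
    (summable_geometric_of_lt_one (by positivity) (inv_lt_one_of_one_lt₀ hc)).mul_left 2
  refine hgeom.of_nonneg_of_le (fun k ↦ by positivity) fun k ↦ ?_
  calc ((⌊c ^ k⌋₊ : ℕ) : ℝ)⁻¹ ≤ (c ^ k / 2)⁻¹ :=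
        inv_anti₀ (by positivity) (Nat.div_two_lt_floor (one_le_pow₀ hc.le)).le
    _ = 2 * c⁻¹ ^ k := by rw [inv_div, inv_pow, div_eq_mul_inv]

namespace ProbabilityTheory

section Poisson

variable {r : ℝ≥0}

lemma natCast_succ_mul_poisson_weight (r : ℝ≥0) (n : ℕ) :
    ((n + 1 : ℕ) : ℝ) * (exp (-r) * r ^ (n + 1) / (n + 1)!) = r * (exp (-r) * r ^ n / n !) := by
  simp only [Nat.factorial_succ, Nat.cast_mul, pow_succ]
  field_simp

/-- The Poisson size-bias identity `𝔼[N g(N)] = r 𝔼[g(N + 1)]` for `N ~ Po(r)`. -/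
lemma HasSum.natCast_mul_poisson_weight {g : ℕ → ℝ} {a : ℝ}
    (h : HasSum (fun n ↦ g (n + 1) * (exp (-r) * r ^ n / n !)) a) :
    HasSum (fun n : ℕ ↦ n * g n * (exp (-r) * r ^ n / n !)) (r * a) := by
  refine (hasSum_nat_add_iff' 1).mp ?_
  simp only [Finset.range_one, Finset.sum_singleton, CharP.cast_eq_zero, zero_mul, sub_zero]
  have shift (n : ℕ) : ((n + 1 : ℕ) : ℝ) * g (n + 1) * (exp (-r) * r ^ (n + 1) / (n + 1)!) =
      r * (g (n + 1) * (exp (-r) * r ^ n / n !)) := by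
    rw [mul_right_comm, natCast_succ_mul_poisson_weight]; ring
  simpa only [shift] using h.mul_left (r : ℝ)

lemma hasSum_natCast_mul_poisson_weight (r : ℝ≥0) :
    HasSum (fun n : ℕ ↦ n * (exp (-r) * r ^ n / n !)) r := by
  have h := HasSum.natCast_mul_poisson_weight (g := fun _ ↦ 1) (r := r)
    (by simpa only [one_mul] using hasSum_one_poissonMeasure r)
  simpa only [mul_one] using h

lemma hasSum_natCast_sq_mul_poisson_weight (r : ℝ≥0) :
    HasSum (fun n : ℕ ↦ (n : ℝ) ^ 2 * (exp (-r) * r ^ n / n !)) (r + r ^ 2) := by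
  have h : HasSum (fun n : ℕ ↦ ((n + 1 : ℕ) : ℝ) * (exp (-r) * r ^ n / n !)) (r + 1) := by
    convert (hasSum_natCast_mul_poisson_weight r).add (hasSum_one_poissonMeasure r) using 2 with n
    push_cast; ring
  convert h.natCast_mul_poisson_weight using 1
  · ext n; ring
  · ring

lemma memLp_natCast_poissonMeasure (r : ℝ≥0) : MemLp (fun n : ℕ ↦ (n : ℝ)) 2 Po(r) := by
  refine (memLp_two_iff_integrable_sq .of_discrete).mpr (integrable_poissonMeasure_iff.mpr ?_)
  simpa [mul_comm] using (hasSum_natCast_sq_mul_poisson_weight r).summable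

lemma integral_natCast_poissonMeasure (r : ℝ≥0) : ∫ n, (n : ℝ) ∂Po(r) = r := by
  simpa [integral_poissonMeasure, mul_comm] using (hasSum_natCast_mul_poisson_weight r).tsum_eq

lemma variance_natCast_poissonMeasure (r : ℝ≥0) : Var[fun n : ℕ ↦ (n : ℝ); Po(r)] = r := by
  have hsq : ∫ n, (n : ℝ) ^ 2 ∂Po(r) = r + r ^ 2 := by
    simpa [integral_poissonMeasure, mul_comm] using (hasSum_natCast_sq_mul_poisson_weight r).tsum_eq
  rw [variance_eq_sub (memLp_natCast_poissonMeasure r), integral_natCast_poissonMeasure]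
  simp only [Pi.pow_apply, hsq]
  ring

variable {Ω : Type*} {mΩ : MeasurableSpace Ω} {P : Measure Ω} {X : Ω → ℕ}

lemma hasLaw_poissonMeasure_of_measure_eq (hX : AEMeasurable X P)
    (h : ∀ n, P {ω | X ω = n} = ENNReal.ofReal (exp (-r) * r ^ n / n !)) : HasLaw X Po(r) P where
  map_eq := Measure.ext_of_singleton fun n ↦ by
    rw [Measure.map_apply_of_aemeasurable hX (measurableSet_singleton n), poissonMeasure_singleton]
    exact h n

lemma HasLaw.memLp_natCast_of_poissonMeasure (hX : HasLaw X Po(r) P) :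
    MemLp (fun ω ↦ (X ω : ℝ)) 2 P :=
  (hX.map_eq ▸ memLp_natCast_poissonMeasure r).comp_of_map hX.aemeasurable

lemma HasLaw.integral_natCast_of_poissonMeasure (hX : HasLaw X Po(r) P) :
    P[fun ω ↦ (X ω : ℝ)] = (r : ℝ) :=
  (hX.integral_comp (f := fun n : ℕ ↦ (n : ℝ)) .of_discrete).trans
    (integral_natCast_poissonMeasure r)

lemma HasLaw.variance_natCast_of_poissonMeasure (hX : HasLaw X Po(r) P) :
    Var[fun ω ↦ (X ω : ℝ); P] = r := by
  rw [← variance_natCast_poissonMeasure r, ← hX.map_eq, variance_map .of_discrete hX.aemeasurable]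
  rfl

end Poisson

section StrongLaw

variable {Ω : Type*} {mΩ : MeasurableSpace Ω} {μ : Measure Ω} [IsFiniteMeasure μ]

theorem ae_tendsto_sub_integral_of_summable_variance {Z : ℕ → Ω → ℝ}
    (hZ : ∀ k, MemLp (Z k) 2 μ) (hsum : Summable fun k ↦ Var[Z k; μ]) :
    ∀ᵐ ω ∂μ, Tendsto (fun k ↦ Z k ω - μ[Z k]) atTop (𝓝 0) := by
  have hmeas (k : ℕ) : AEMeasurable (fun ω ↦ ENNReal.ofReal ((Z k ω - μ[Z k]) ^ 2)) μ :=
    (((hZ k).aestronglyMeasurable.aemeasurable.sub_const _).pow_const 2).ennreal_ofReal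
  have hfin : ∫⁻ ω, ∑' k, ENNReal.ofReal ((Z k ω - μ[Z k]) ^ 2) ∂μ ≠ ∞ := by
    rw [lintegral_tsum hmeas]
    simp_rw [← evariance_eq_lintegral_ofReal, ← (hZ _).ofReal_variance_eq]
    rw [← ENNReal.ofReal_tsum_of_nonneg (fun k ↦ variance_nonneg _ _) hsum]
    exact ENNReal.ofReal_ne_top
  filter_upwards [ae_lt_top' (AEMeasurable.tsum hmeas) hfin] with ω hω
  have hsq : Tendsto (fun k ↦ (Z k ω - μ[Z k]) ^ 2) atTop (𝓝 0) :=
    (ENNReal.summable_toReal hω.ne).tendsto_atTop_zero.congr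
      fun k ↦ ENNReal.toReal_ofReal (sq_nonneg _)
  rw [tendsto_zero_iff_abs_tendsto_zero]
  simpa [Function.comp_def, Real.sqrt_sq_eq_abs] using hsq.sqrt

variable {S : ℕ → Ω → ℝ} {C a : ℝ}

theorem ae_tendsto_div_nat_floor_pow_of_variance_le (hS : ∀ n, MemLp (S n) 2 μ)
    (hvar : ∀ n, Var[S n; μ] ≤ C * n) (hmean : Tendsto (fun n : ℕ ↦ μ[S n] / (n : ℝ)) atTop (𝓝 a))
    {c : ℝ} (hc : 1 < c) :
    ∀ᵐ ω ∂μ, Tendsto (fun k ↦ S ⌊c ^ k⌋₊ ω / (⌊c ^ k⌋₊ : ℝ)) atTop (𝓝 a) := by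
  set u : ℕ → ℕ := fun k ↦ ⌊c ^ k⌋₊
  have hvar_le (k : ℕ) : Var[fun ω ↦ S (u k) ω / u k; μ] ≤ C * (u k : ℝ)⁻¹ := by
    simp_rw [div_eq_mul_inv, variance_mul_const]
    calc Var[S (u k); μ] * ((u k : ℝ)⁻¹) ^ 2 ≤ C * u k * ((u k : ℝ)⁻¹) ^ 2 := by
          gcongr; exact hvar _
      _ = C * (u k : ℝ)⁻¹ := by field_simp
  have hsum : Summable fun k ↦ Var[fun ω ↦ S (u k) ω / u k; μ] :=
    ((summable_inv_nat_floor_pow hc).mul_left C).of_nonneg_of_le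
      (fun _ ↦ variance_nonneg _ _) hvar_le
  have hmean_u : Tendsto (fun k ↦ μ[fun ω ↦ S (u k) ω / u k]) atTop (𝓝 a) := by
    simp_rw [integral_div]
    exact hmean.comp (tendsto_nat_floor_atTop.comp (tendsto_pow_atTop_atTop_of_one_lt hc))
  have hZ (k : ℕ) : MemLp (fun ω ↦ S (u k) ω / u k) 2 μ := by
    simpa only [div_eq_mul_inv] using (hS (u k)).mul_const _
  filter_upwards [ae_tendsto_sub_integral_of_summable_variance hZ hsum] with ω hω
  simpa using hω.add hmean_u

theorem ae_tendsto_div_of_monotone_of_variance_le (hS : ∀ n, MemLp (S n) 2 μ)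
    (hmono : ∀ᵐ ω ∂μ, Monotone fun n ↦ S n ω) (hvar : ∀ n, Var[S n; μ] ≤ C * n)
    (hmean : Tendsto (fun n : ℕ ↦ μ[S n] / (n : ℝ)) atTop (𝓝 a)) :
    ∀ᵐ ω ∂μ, Tendsto (fun n : ℕ ↦ S n ω / n) atTop (𝓝 a) := by
  obtain ⟨c, -, hc_gt, hc_lim⟩ := exists_seq_strictAnti_tendsto (1 : ℝ)
  filter_upwards [hmono, ae_all_iff.2 fun k ↦
    ae_tendsto_div_nat_floor_pow_of_variance_le hS hvar hmean (hc_gt k)] with ω hω_mono hω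
  exact tendsto_div_of_monotone_of_tendsto_div_floor_pow _ a hω_mono c hc_gt hc_lim hω

end StrongLaw

end ProbabilityTheory

/-- Strong law for independent Poisson random variables with bounded means: if `X i` are
jointly independent, `X i ~ Poisson(Λ i)` with `Λ i ≤ λ_max`, and the running averages of
the means converge to `λ̄`, then the running averages of the `X i` converge to `λ̄`
almost surely. -/
theorem poisson_strong_law {Ω : Type*} [MeasureSpace Ω]
    [IsProbabilityMeasure (ℙ : Measure Ω)]
    (X : ℕ → Ω → ℕ) (Λ : ℕ → ℝ) (lamMax lamBar : ℝ)
    (hmeas : ∀ i, Measurable (X i))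
    (hindep : iIndepFun X ℙ)
    (hΛnonneg : ∀ i, 0 ≤ Λ i) (hΛbdd : ∀ i, Λ i ≤ lamMax)
    (hpois : ∀ i k, ℙ {ω | X i ω = k}
      = ENNReal.ofReal (Real.exp (-(Λ i)) * Λ i ^ k / (Nat.factorial k)))
    (hmean : Filter.Tendsto (fun n : ℕ => (∑ i ∈ Finset.range n, Λ i) / n)
      Filter.atTop (nhds lamBar)) :
    ∀ᵐ ω ∂(ℙ : Measure Ω),
      Filter.Tendsto (fun n : ℕ => (∑ i ∈ Finset.range n, (X i ω : ℝ)) / n)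
        Filter.atTop (nhds lamBar) := by
  have hlaw (i : ℕ) : HasLaw (X i) Po((Λ i).toNNReal) ℙ :=
    hasLaw_poissonMeasure_of_measure_eq (hmeas i).aemeasurable fun k ↦ by
      rw [hpois, Real.coe_toNNReal _ (hΛnonneg i)]
  set Y : ℕ → Ω → ℝ := fun i ω ↦ X i ω
  have hY (i : ℕ) : MemLp (Y i) 2 ℙ := (hlaw i).memLp_natCast_of_poissonMeasure
  have hY_mean (i : ℕ) : ℙ[Y i] = Λ i := by
    rw [(hlaw i).integral_natCast_of_poissonMeasure, Real.coe_toNNReal _ (hΛnonneg i)]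
  have hY_var (i : ℕ) : Var[Y i; ℙ] = Λ i := by
    rw [(hlaw i).variance_natCast_of_poissonMeasure, Real.coe_toNNReal _ (hΛnonneg i)]
  set S : ℕ → Ω → ℝ := fun n ω ↦ ∑ i ∈ Finset.range n, Y i ω
  have hS_mono (ω : Ω) : Monotone fun n ↦ S n ω := fun m n hmn ↦
    Finset.sum_le_sum_of_subset_of_nonneg (Finset.range_mono hmn) fun i _ _ ↦ Nat.cast_nonneg _
  have hS_mean (n : ℕ) : ℙ[S n] = ∑ i ∈ Finset.range n, Λ i := by
    rw [integral_finsetSum _ fun i _ ↦ (hY i).integrable one_le_two]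
    exact Finset.sum_congr rfl fun i _ ↦ hY_mean i
  have hS_var (n : ℕ) : Var[S n; ℙ] ≤ lamMax * n := by
    have hY_indep : Set.Pairwise (Finset.range n : Set ℕ) fun i j ↦ IndepFun (Y i) (Y j) ℙ :=
      fun i _ j _ hij ↦ (hindep.indepFun hij).comp measurable_from_nat measurable_from_nat
    calc Var[S n; ℙ] = ∑ i ∈ Finset.range n, Λ i := by
          rw [show S n = ∑ i ∈ Finset.range n, Y i from (Finset.sum_fn _ _).symm,
            IndepFun.variance_sum (fun i _ ↦ hY i) hY_indep]
          exact Finset.sum_congr rfl fun i _ ↦ hY_var i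
      _ ≤ lamMax * n := by
          simpa [mul_comm] using Finset.sum_le_sum fun i (_ : i ∈ Finset.range n) ↦ hΛbdd i
  exact ae_tendsto_div_of_monotone_of_variance_le (fun n ↦ memLp_finsetSum _ fun i _ ↦ hY i)
    (ae_of_all _ hS_mono) hS_var (hmean.congr fun n ↦ by rw [hS_mean])
end

section
/- Fix φ > 0 and λ̄ > 0, λ̄₀ > 0. Let N : ℝ → ℝ and Λ₀ : ℝ → ℝ be functions with N(t) ≥ 0 and Λ₀(t) ≥ 0 for all t > 0, N(t)/t → λ̄ and Λ₀(t)/t → λ̄₀ as t → ∞. Define, for t > 0, log M(t) = φ log φ − (φ + N(t)) log(φ + Λ₀(t)) + Λ₀(t) + log Γ(φ + N(t)) − log Γ(φ). Then (log M(t))/t → λ̄ log(λ̄/λ̄₀) − (λ̄ − λ̄₀) as t → ∞. -/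
/-! Stirling's formula gives `log Γ(x) = x log x - x + O(log x)`. Hence, with `a = φ + N(t)` and
`b = φ + Λ₀(t)`, we get `log M(t) = a log (a / b) - a + Λ₀(t) + o(t)`, and after dividing by `t`
the right side tends to `λ̄ log (λ̄ / λ̄₀) - λ̄ + λ̄₀`. -/

open Real Filter Asymptotics Topology

theorem mul_log_sub_self_tangent_le {x y : ℝ} (hx : 0 < x) (hy : 0 < y) :
    x * log x - x + (y - x) * log x ≤ y * log y - y := by
  have hlog := log_le_sub_one_of_pos (div_pos hx hy)
  rw [log_div hx.ne' hy.ne'] at hlog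
  have hkey : y * (log x - log y) ≤ x - y :=
    calc y * (log x - log y) ≤ y * (x / y - 1) := by gcongr
      _ = x - y := by field_simp
  linarith

/-- The Stirling sequence decreases from `stirlingSeq 1 = e / √2`. -/
theorem log_factorial_le_stirling {n : ℕ} (hn : n ≠ 0) :
    log (n.factorial : ℝ) ≤ n * log n - n + 1 + log n / 2 := by
  have hpos : (0 : ℝ) < n := by positivity
  have hseq : log (Stirling.stirlingSeq n) ≤ log (Stirling.stirlingSeq 1) := by
    obtain ⟨m, rfl⟩ := Nat.exists_eq_succ_of_ne_zero hn
    exact Stirling.log_stirlingSeq'_antitone (Nat.zero_le m)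
  rw [Stirling.log_stirlingSeq_formula, Stirling.log_stirlingSeq_formula,
    log_div hpos.ne' (exp_ne_zero 1), log_mul two_ne_zero hpos.ne'] at hseq
  simp only [Nat.cast_one, Nat.factorial_one, log_one, mul_one, one_div, log_inv, log_exp,
    one_mul] at hseq
  linarith

/-- `Γ` increases on `[2, ∞)`, so `Γ x` lies between `Γ n = (n - 1)!` and `Γ (n + 1) = n!` for
`n = ⌊x⌋`, and Stirling bounds both factorials. -/
theorem abs_log_Gamma_sub_le {x : ℝ} (hx : 2 ≤ x) :
    |log (Gamma x) - (x * log x - x)| ≤ 1 + 2 * log x := by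
  set n := ⌊x⌋₊
  have hn2 : (2 : ℝ) ≤ n := by exact_mod_cast Nat.le_floor (by exact_mod_cast hx)
  have hnx : (n : ℝ) ≤ x := Nat.floor_le (by linarith)
  have hxn : x ≤ n + 1 := (Nat.lt_floor_add_one x).le
  have hn0 : (0 : ℝ) < n := by linarith
  have hn_ne : n ≠ 0 := by exact_mod_cast hn0.ne'
  have hGn1 : Gamma (n + 1) = n.factorial := Gamma_nat_eq_factorial n
  have hGn : Gamma (n + 1) = n * Gamma n := Gamma_add_one hn0.ne'
  have hGpos : 0 < Gamma n := Gamma_pos_of_pos hn0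
  have hGx : Gamma n ≤ Gamma x := Gamma_strictMonoOn_Ici.monotoneOn hn2 (hn2.trans hnx) hnx
  have hxG : Gamma x ≤ Gamma (n + 1) :=
    Gamma_strictMonoOn_Ici.monotoneOn (hn2.trans hnx) (show (2 : ℝ) ≤ n + 1 by linarith) hxn
  have hfact := log_factorial_le_stirling hn_ne
  have hfact_ge := Stirling.le_log_factorial_stirling hn_ne
  have hlogn : log n ≤ log x := log_le_log hn0 hnx
  have hlogn0 : 0 ≤ log n := log_nonneg (by linarith)
  have hupper : log (Gamma x) ≤ log (n.factorial : ℝ) :=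
    hGn1 ▸ log_le_log (hGpos.trans_le hGx) hxG
  have hlower : log (n.factorial : ℝ) - log n ≤ log (Gamma x) := by
    rw [← hGn1, hGn, log_mul hn0.ne' hGpos.ne']
    linarith [log_le_log hGpos hGx]
  have htan_n := mul_log_sub_self_tangent_le hn0 (hn0.trans_le hnx)
  have htan_x := mul_log_sub_self_tangent_le (hn0.trans_le hnx) hn0
  have hlog2π : 0 ≤ log (2 * π) := log_nonneg (by linarith [pi_gt_three])
  have hslope_n : 0 ≤ (x - n) * log n := mul_nonneg (by linarith) hlogn0
  have hslope_x : (x - n) * log x ≤ log x :=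
    mul_le_of_le_one_left (log_nonneg (by linarith)) (by linarith)
  rw [abs_le]
  constructor <;> linarith

theorem isLittleO_log_Gamma_sub_mul_log_sub_self :
    (fun x => log (Gamma x) - (x * log x - x)) =o[atTop] id := by
  have hbound : (fun x => log (Gamma x) - (x * log x - x)) =O[atTop] fun x => 1 + 2 * log x := by
    refine IsBigO.of_bound 1 ?_
    filter_upwards [eventually_ge_atTop 2] with x hx
    have hpos : 0 ≤ 1 + 2 * log x := by linarith [log_nonneg (by linarith : (1 : ℝ) ≤ x)]
    rw [one_mul, Real.norm_of_nonneg hpos, norm_eq_abs]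
    exact abs_log_Gamma_sub_le hx
  exact hbound.trans_isLittleO
    ((isLittleO_const_id_atTop 1).add (isLittleO_log_id_atTop.const_mul_left 2))

theorem tendsto_const_add_div_atTop {f : ℝ → ℝ} {l : ℝ} (c : ℝ)
    (hf : Tendsto (fun t => f t / t) atTop (𝓝 l)) :
    Tendsto (fun t => (c + f t) / t) atTop (𝓝 l) := by
  simpa only [add_div, zero_add, id] using (tendsto_const_nhds.div_atTop tendsto_id).add hf

theorem tendsto_log_Gamma_sub_mul_log_sub_self_div {a : ℝ → ℝ} {α : ℝ} (hα : 0 < α)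
    (ha : Tendsto (fun t => a t / t) atTop (𝓝 α)) :
    Tendsto (fun t => (log (Gamma (a t)) - (a t * log (a t) - a t)) / t) atTop (𝓝 0) := by
  have ha_top : Tendsto a atTop atTop := by
    refine (Tendsto.pos_mul_atTop hα ha tendsto_id).congr' ?_
    filter_upwards [eventually_ne_atTop 0] with t ht
    exact div_mul_cancel₀ (a t) ht
  have ha_bigO : a =O[atTop] id :=
    isBigO_of_div_tendsto_nhds
      (by filter_upwards [eventually_ne_atTop 0] with t ht h using absurd h ht) α ha
  exact ((isLittleO_log_Gamma_sub_mul_log_sub_self.comp_tendsto ha_top).trans_isBigO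
    ha_bigO).tendsto_div_nhds_zero

/-- Asymptotic growth rate of the Gamma-mixture supermartingale: if `N(t)/t → λ̄` and
`Λ₀(t)/t → λ̄₀`, then `(log M(t))/t → λ̄ log(λ̄/λ̄₀) − (λ̄ − λ̄₀)`, the KL divergence of
`Poisson(λ̄)` from `Poisson(λ̄₀)`. -/
theorem log_M_growth_rate (φ lamBar lam0 : ℝ) (hφ : 0 < φ) (hlam : 0 < lamBar)
    (hlam0 : 0 < lam0) (N Λ₀ : ℝ → ℝ)
    (hN : ∀ t : ℝ, 0 < t → 0 ≤ N t) (hΛ₀ : ∀ t : ℝ, 0 < t → 0 ≤ Λ₀ t)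
    (hNlim : Filter.Tendsto (fun t : ℝ => N t / t) Filter.atTop (nhds lamBar))
    (hΛlim : Filter.Tendsto (fun t : ℝ => Λ₀ t / t) Filter.atTop (nhds lam0)) :
    Filter.Tendsto
      (fun t : ℝ =>
        (φ * Real.log φ - (φ + N t) * Real.log (φ + Λ₀ t) + Λ₀ t
            + Real.log (Real.Gamma (φ + N t)) - Real.log (Real.Gamma φ)) / t)
      Filter.atTop
      (nhds (lamBar * Real.log (lamBar / lam0) - (lamBar - lam0))) := by
  have hA : Tendsto (fun t => (φ + N t) / t) atTop (𝓝 lamBar) :=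
    tendsto_const_add_div_atTop φ hNlim
  have hB : Tendsto (fun t => (φ + Λ₀ t) / t) atTop (𝓝 lam0) :=
    tendsto_const_add_div_atTop φ hΛlim
  have hconst : Tendsto (fun t => (φ * log φ - log (Gamma φ)) / t) atTop (𝓝 0) :=
    tendsto_const_nhds.div_atTop tendsto_id
  have hGamma := tendsto_log_Gamma_sub_mul_log_sub_self_div hlam hA
  have hKL : Tendsto (fun t => (φ + N t) / t * log ((φ + N t) / t / ((φ + Λ₀ t) / t))) atTop
      (𝓝 (lamBar * log (lamBar / lam0))) :=
    hA.mul ((hA.div hB hlam0.ne').log (div_pos hlam hlam0).ne')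
  have hlim := ((hconst.add hGamma).add hKL).add (hΛlim.sub hA)
  rw [show lamBar * log (lamBar / lam0) - (lamBar - lam0)
      = 0 + 0 + lamBar * log (lamBar / lam0) + (lam0 - lamBar) by ring]
  refine hlim.congr' ?_
  filter_upwards [eventually_gt_atTop 0] with t ht
  have hNt : 0 < φ + N t := by linarith [hN t ht]
  have hΛt : 0 < φ + Λ₀ t := by linarith [hΛ₀ t ht]
  rw [div_div_div_cancel_right₀ ht.ne', log_div hNt.ne' hΛt.ne']
  field_simp
  ring
end

section
/- Fix φ > 0 and a > 0, b > 0. Let N_A : ℝ → ℝ and N_B : ℝ → ℝ be nonnegative functions with N_A(t)/t → a and N_B(t)/t → b as t → ∞. Define, for t > 0, log E(t) = 2φ log φ − 2 log Γ(φ) + log Γ(φ + N_A(t)) + log Γ(φ + N_B(t)) − (2φ + N_A(t) + N_B(t)) · log(φ + (N_A(t) + N_B(t))/2) + N_A(t) + N_B(t). Then (log E(t))/t → a·log(2a/(a+b)) + b·log(2b/(a+b)) as t → ∞. -/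
/-!
Stirling's formula and the monotonicity of `Γ` on `[2, ∞)` give
`log Γ(y) = y log y - y + o(y)`. With `x = φ + N_A(t)` and `y = φ + N_B(t)` this turns `log E(t)`
into `x log x + y log y - (x + y) log ((x + y) / 2) + o(t)`, which is homogeneous of degree one
in `(x, y)`; dividing by `t` and letting `x / t → a`, `y / t → b` gives the limit.
-/

open Filter Real Asymptotics

section

open scoped Nat

lemma isLittleO_log_factorial_sub :
    (fun n : ℕ => log n ! - (n * log n - n)) =o[atTop] (fun n : ℕ => (n : ℝ)) := by
  have hcast := tendsto_natCast_atTop_atTop (R := ℝ)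
  have hseq : (fun n => log (Stirling.stirlingSeq n)) =o[atTop] (fun n : ℕ => (n : ℝ)) :=
    (((continuousAt_log (by positivity)).tendsto.comp
      Stirling.tendsto_stirlingSeq_sqrt_pi).isBigO_one ℝ).trans_isLittleO
      ((isLittleO_one_left_iff ℝ).2 (tendsto_norm_atTop_atTop.comp hcast))
  have hlog : (fun n : ℕ => log (2 * n)) =o[atTop] (fun n : ℕ => (n : ℝ)) :=
    (isLittleO_log_id_atTop.comp_tendsto (hcast.const_mul_atTop two_pos)).trans_isBigO
      ((isBigO_refl _ _).const_mul_left 2)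
  refine (hseq.add (hlog.const_mul_left (1 / 2))).congr' ?_ EventuallyEq.rfl
  filter_upwards [eventually_ne_atTop 0] with n hn
  -- `log n! - (n log n - n) = log (stirlingSeq n) + log (2n) / 2`
  have h := Stirling.log_stirlingSeq_formula n
  rw [log_div (by positivity) (exp_ne_zero 1), log_exp] at h
  linarith

lemma mul_log_sub_self_tangent_le_s9 {p q : ℝ} (hp : 0 < p) (hq : 0 < q) :
    p * log p - p + (q - p) * log p ≤ q * log q - q := by
  have h := log_le_sub_one_of_pos (div_pos hp hq)
  rw [log_div hp.ne' hq.ne', le_sub_iff_add_le] at h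
  have := mul_le_mul_of_nonneg_left h hq.le
  rw [mul_div_cancel₀ _ hq.ne'] at this
  linarith

lemma log_Gamma_mem_Icc_log_factorial_floor {y : ℝ} (hy : 2 ≤ y) :
    log (Gamma y) ∈ Set.Icc (log ⌊y⌋₊ ! - log y) (log ⌊y⌋₊ !) := by
  set n := ⌊y⌋₊
  have hn : (2 : ℝ) ≤ n := by exact_mod_cast Nat.le_floor (by exact_mod_cast hy)
  have hny : (n : ℝ) ≤ y := Nat.floor_le (by linarith)
  have hyn : y ≤ n + 1 := (Nat.lt_floor_add_one y).le
  have hmono := Gamma_strictMonoOn_Ici.monotoneOn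
  have hfact : Gamma (n + 1) = n ! := Gamma_nat_eq_factorial n
  have hGn : 0 < Gamma n := Gamma_pos_of_pos (by linarith)
  have hshift : log (Gamma (n + 1)) = log (Gamma n) + log n := by
    rw [Gamma_add_one (by positivity), log_mul (by positivity) hGn.ne']; ring
  rw [← hfact]
  constructor
  · have := log_le_log hGn (hmono hn (hn.trans hny) hny)
    have := log_le_log (by positivity) hny
    linarith
  · exact log_le_log (Gamma_pos_of_pos (by linarith))
      (hmono (hn.trans hny) (by linarith : (2 : ℝ) ≤ n + 1) hyn)

lemma abs_log_Gamma_sub_sub_log_factorial_floor_le {y : ℝ} (hy : 2 ≤ y) :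
    |(log (Gamma y) - (y * log y - y)) - (log ⌊y⌋₊ ! - (⌊y⌋₊ * log ⌊y⌋₊ - ⌊y⌋₊))|
      ≤ 2 * log y := by
  set n := ⌊y⌋₊
  have hn : (1 : ℝ) ≤ n := by exact_mod_cast Nat.le_floor (by norm_num; linarith)
  have hny : (n : ℝ) ≤ y := Nat.floor_le (by linarith)
  have hyn : y ≤ n + 1 := (Nat.lt_floor_add_one y).le
  have hlogn : 0 ≤ log n := log_nonneg hn
  have hlogy : 0 ≤ log y := log_nonneg (by linarith)
  have ⟨hlow, hupp⟩ := log_Gamma_mem_Icc_log_factorial_floor hy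
  have hn0 : (0 : ℝ) < n := by linarith
  have hy0 : 0 < y := by linarith
  have htan_n := mul_log_sub_self_tangent_le_s9 hn0 hy0
  have htan_y := mul_log_sub_self_tangent_le_s9 hy0 hn0
  rw [abs_le]
  constructor <;> nlinarith

theorem isLittleO_log_Gamma_sub : (fun y => log (Gamma y) - (y * log y - y)) =o[atTop] id := by
  have hfloor : (fun y : ℝ => log ⌊y⌋₊ ! - (⌊y⌋₊ * log ⌊y⌋₊ - ⌊y⌋₊)) =o[atTop] id :=
    (isLittleO_log_factorial_sub.comp_tendsto tendsto_nat_floor_atTop).trans_isBigO <|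
      IsBigO.of_bound 1 <| by
        filter_upwards [eventually_ge_atTop 0] with y hy
        simpa [abs_of_nonneg hy] using Nat.floor_le hy
  have hdiff : (fun y => (log (Gamma y) - (y * log y - y))
      - (log ⌊y⌋₊ ! - (⌊y⌋₊ * log ⌊y⌋₊ - ⌊y⌋₊))) =O[atTop] log :=
    IsBigO.of_bound 2 <| by
      filter_upwards [eventually_ge_atTop 2] with y hy
      rw [norm_eq_abs, norm_eq_abs, abs_of_nonneg (log_nonneg (by linarith))]
      exact abs_log_Gamma_sub_sub_log_factorial_floor_le hy
  simpa using hfloor.add (hdiff.trans_isLittleO isLittleO_log_id_atTop)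

lemma isLittleO_log_Gamma_sub_of_tendsto_div {f : ℝ → ℝ} {c : ℝ} (hc : 0 < c)
    (hf : Tendsto (fun t => f t / t) atTop (nhds c)) :
    (fun t => log (Gamma (f t)) - (f t * log (f t) - f t)) =o[atTop] id := by
  have hf_top : Tendsto f atTop atTop := (hf.pos_mul_atTop hc tendsto_id).congr' <| by
    filter_upwards [eventually_ne_atTop 0] with t ht
    exact div_mul_cancel₀ _ ht
  have hfO : f =O[atTop] id := isBigO_of_div_tendsto_nhds (by
    filter_upwards [eventually_ne_atTop 0] with t ht h0
    exact absurd h0 ht) c hf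
  exact (isLittleO_log_Gamma_sub.comp_tendsto hf_top).trans_isBigO hfO

end

/-- `D_KL(Poisson u ‖ Poisson m) + D_KL(Poisson v ‖ Poisson m)` with `m = (u + v) / 2`: the linear
terms `m - u` and `m - v` of the two divergences cancel. -/
noncomputable def poissonKLToMidpoint (u v : ℝ) : ℝ :=
  u * log (2 * u / (u + v)) + v * log (2 * v / (u + v))

lemma poissonKLToMidpoint_eq {u v : ℝ} (hu : 0 < u) (hv : 0 < v) :
    poissonKLToMidpoint u v = u * log u + v * log v - (u + v) * log ((u + v) / 2) := by
  have hm : 0 < (u + v) / 2 := by positivity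
  have hmid (w : ℝ) : 2 * w / (u + v) = w / ((u + v) / 2) := by rw [div_div_eq_mul_div, mul_comm]
  rw [poissonKLToMidpoint, hmid, hmid, log_div hu.ne' hm.ne', log_div hv.ne' hm.ne']
  ring

lemma poissonKLToMidpoint_div_div (u v : ℝ) {t : ℝ} (ht : t ≠ 0) :
    poissonKLToMidpoint (u / t) (v / t) = poissonKLToMidpoint u v / t := by
  simp only [poissonKLToMidpoint, ← add_div, mul_div_assoc', div_div_div_cancel_right₀ ht]
  ring

lemma Filter.Tendsto.poissonKLToMidpoint {α : Type*} {l : Filter α} {f g : α → ℝ} {u v : ℝ}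
    (hf : Tendsto f l (nhds u)) (hg : Tendsto g l (nhds v)) (hu : 0 < u) (hv : 0 < v) :
    Tendsto (fun t => poissonKLToMidpoint (f t) (g t)) l (nhds (poissonKLToMidpoint u v)) :=
  (hf.mul (((hf.const_mul 2).div (hf.add hg) (by positivity)).log (by positivity))).add
    (hg.mul (((hg.const_mul 2).div (hf.add hg) (by positivity)).log (by positivity)))

theorem log_E_growth_rate_general (φ a b : ℝ) (ha : 0 < a) (hb : 0 < b)
    (NA NB : ℝ → ℝ)
    (hNAlim : Filter.Tendsto (fun t : ℝ => NA t / t) Filter.atTop (nhds a))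
    (hNBlim : Filter.Tendsto (fun t : ℝ => NB t / t) Filter.atTop (nhds b)) :
    Filter.Tendsto
      (fun t : ℝ =>
        (2 * φ * Real.log φ - 2 * Real.log (Real.Gamma φ)
            + Real.log (Real.Gamma (φ + NA t)) + Real.log (Real.Gamma (φ + NB t))
            - (2 * φ + NA t + NB t) * Real.log (φ + (NA t + NB t) / 2)
            + NA t + NB t) / t)
      Filter.atTop
      (nhds (a * Real.log (2 * a / (a + b)) + b * Real.log (2 * b / (a + b)))) := by
  have hφ : Tendsto (fun t => φ / t) atTop (nhds 0) := tendsto_const_nhds.div_atTop tendsto_id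
  have hA : Tendsto (fun t => (φ + NA t) / t) atTop (nhds a) := by
    simpa [add_div] using hφ.add hNAlim
  have hB : Tendsto (fun t => (φ + NB t) / t) atTop (nhds b) := by
    simpa [add_div] using hφ.add hNBlim
  have hconst : Tendsto (fun t => (2 * φ * log φ - 2 * log (Gamma φ) - 2 * φ) / t) atTop
      (nhds 0) := tendsto_const_nhds.div_atTop tendsto_id
  have hsum := ((hconst.add
    (isLittleO_log_Gamma_sub_of_tendsto_div ha hA).tendsto_div_nhds_zero).add
    (isLittleO_log_Gamma_sub_of_tendsto_div hb hB).tendsto_div_nhds_zero).add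
    (hA.poissonKLToMidpoint hB ha hb)
  rw [zero_add, zero_add, zero_add] at hsum
  refine hsum.congr' ?_
  filter_upwards [eventually_gt_atTop 0, hA.eventually (eventually_gt_nhds ha),
    hB.eventually (eventually_gt_nhds hb)] with t ht hAt hBt
  have hx : 0 < φ + NA t := (div_pos_iff_of_pos_right ht).1 hAt
  have hy : 0 < φ + NB t := (div_pos_iff_of_pos_right ht).1 hBt
  have hm : (φ + NA t + (φ + NB t)) / 2 = φ + (NA t + NB t) / 2 := by ring
  rw [id, poissonKLToMidpoint_div_div _ _ ht.ne', poissonKLToMidpoint_eq hx hy, hm]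
  field_simp
  ring

/-- Asymptotic growth rate of the universal-inference e-process for testing equality of
two Poisson intensities: if `N_A(t)/t → a` and `N_B(t)/t → b`, then
`(log E(t))/t → a log(2a/(a+b)) + b log(2b/(a+b))`. -/
theorem log_E_growth_rate (φ a b : ℝ) (hφ : 0 < φ) (ha : 0 < a) (hb : 0 < b)
    (NA NB : ℝ → ℝ) (hNA : ∀ t : ℝ, 0 ≤ NA t) (hNB : ∀ t : ℝ, 0 ≤ NB t)
    (hNAlim : Filter.Tendsto (fun t : ℝ => NA t / t) Filter.atTop (nhds a))
    (hNBlim : Filter.Tendsto (fun t : ℝ => NB t / t) Filter.atTop (nhds b)) :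
    Filter.Tendsto
      (fun t : ℝ =>
        (2 * φ * Real.log φ - 2 * Real.log (Real.Gamma φ)
            + Real.log (Real.Gamma (φ + NA t)) + Real.log (Real.Gamma (φ + NB t))
            - (2 * φ + NA t + NB t) * Real.log (φ + (NA t + NB t) / 2)
            + NA t + NB t) / t)
      Filter.atTop
      (nhds (a * Real.log (2 * a / (a + b)) + b * Real.log (2 * b / (a + b)))) :=
  log_E_growth_rate_general φ a b ha hb NA NB hNAlim hNBlim
end

section
/- Fix α > 0, β > 0 and a > 0, b > 0. Let N_A : ℝ → ℝ and N_B : ℝ → ℝ be nonnegative functions with N_A(t)/t → a and N_B(t)/t → b as t → ∞. Define, for t > 0, log Ẽ(t) = log Γ(N_A(t) + β) + log Γ(N_B(t) + α) − log Γ(N_A(t) + N_B(t) + α + β) − log B(α,β) + (N_A(t) + N_B(t)) · log 2, where B(α,β) = Γ(α)Γ(β)/Γ(α+β). Then (log Ẽ(t))/t → a·log(2a/(a+b)) + b·log(2b/(a+b)) as t → ∞. -/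
/-!
Stirling's formula in the weak form `log Γ(x) = x log x - x + O(log x)` is all that is needed;
for real `x ≥ 2` it follows from Stirling's bounds for `n!` at the neighbouring integers, since
`Γ` is increasing on `[2, ∞)`.
Writing `u = N_A + β`, `v = N_B + α`, the linear parts of `log Γ(u) + log Γ(v) - log Γ(u + v)`
cancel, and the remaining `u log u + v log v - (u + v) log (u + v)` is homogeneous of degree one,
so divided by `t` it tends to `a log a + b log b - (a + b) log (a + b)`. Adding `(a + b) log 2`
gives the claimed rate.
-/

open Real Filter Topology Asymptotics

noncomputable def stirlingLead (x : ℝ) : ℝ := x * log x - x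

/-- Tangent-line inequality: `stirlingLead` is convex with derivative `log`. -/
lemma sub_mul_log_le_stirlingLead_sub {p q : ℝ} (hp : 0 < p) (hq : 0 < q) :
    (q - p) * log p ≤ stirlingLead q - stirlingLead p := by
  have hlog : log p - log q ≤ p / q - 1 := by
    simpa only [log_div hp.ne' hq.ne'] using log_le_sub_one_of_pos (div_pos hp hq)
  have key : q * (log p - log q) ≤ p - q := by
    calc q * (log p - log q) ≤ q * (p / q - 1) := mul_le_mul_of_nonneg_left hlog hq.le
      _ = p - q := by field_simp
  unfold stirlingLead
  linear_combination key

lemma stirlingLead_le_log_factorial (n : ℕ) : stirlingLead n ≤ log n.factorial := by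
  rcases Nat.eq_zero_or_pos n with rfl | hn
  · simp [stirlingLead]
  have hpow : (0 : ℝ) < (n : ℝ) ^ n := pow_pos (Nat.cast_pos.2 hn) n
  have h := log_le_log (by positivity) (pow_div_factorial_le_exp _ (Nat.cast_nonneg n) n)
  rw [log_div hpow.ne' (by positivity), log_pow, log_exp] at h
  unfold stirlingLead
  linarith

lemma log_factorial_le {n : ℕ} (hn : n ≠ 0) :
    log n.factorial ≤ stirlingLead n + log n / 2 + 1 := by
  obtain ⟨m, rfl⟩ := Nat.exists_eq_succ_of_ne_zero hn
  have hseq : log (Stirling.stirlingSeq (m + 1)) ≤ 1 - log 2 / 2 := by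
    calc log (Stirling.stirlingSeq (m + 1)) ≤ log (Stirling.stirlingSeq 1) :=
          log_le_log (Stirling.stirlingSeq'_pos m) (Stirling.stirlingSeq'_antitone (Nat.zero_le m))
      _ = 1 - log 2 / 2 := by
          rw [Stirling.stirlingSeq_one, log_div (exp_ne_zero 1) (by positivity), log_exp,
            log_sqrt zero_le_two]
  have hm : (0 : ℝ) < (m + 1 : ℕ) := by positivity
  have hformula := Stirling.log_stirlingSeq_formula (m + 1)
  rw [log_mul two_ne_zero hm.ne', log_div hm.ne' (exp_ne_zero 1), log_exp] at hformula
  unfold stirlingLead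
  linarith

lemma log_Gamma_le {x : ℝ} (hx : 2 ≤ x) : log (Gamma x) ≤ stirlingLead x + log x / 2 + 1 := by
  set n := ⌊x⌋₊
  have hn : (2 : ℝ) ≤ n := by exact_mod_cast Nat.le_floor (by exact_mod_cast hx)
  have hnx : (n : ℝ) ≤ x := Nat.floor_le (by linarith)
  have hxn : x < n + 1 := Nat.lt_floor_add_one x
  have hGamma : Gamma x ≤ n.factorial := by
    rw [← Gamma_nat_eq_factorial]
    exact Gamma_strictMonoOn_Ici.monotoneOn (Set.mem_Ici.2 hx)
      (Set.mem_Ici.2 (by linarith)) hxn.le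
  have htangent := sub_mul_log_le_stirlingLead_sub (p := n) (q := x) (by linarith) (by linarith)
  have hlog_n : 0 ≤ (x - n) * log n := mul_nonneg (by linarith) (log_nonneg (by linarith))
  have hlog : log n ≤ log x := log_le_log (by linarith) hnx
  have hfact := log_factorial_le (n := n) (by exact_mod_cast (show (0 : ℝ) < n by linarith).ne')
  have := log_le_log (Gamma_pos_of_pos (by linarith)) hGamma
  linarith

lemma le_log_Gamma {x : ℝ} (hx : 2 ≤ x) : stirlingLead x - 2 * log x ≤ log (Gamma x) := by
  set m := ⌊x - 1⌋₊
  have hm : (1 : ℝ) ≤ m := by exact_mod_cast Nat.le_floor (by push_cast; linarith)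
  have hmx : (m : ℝ) ≤ x - 1 := Nat.floor_le (by linarith)
  have hxm : x - 1 < m + 1 := Nat.lt_floor_add_one (x - 1)
  have hGamma : (m.factorial : ℝ) ≤ Gamma x := by
    rw [← Gamma_nat_eq_factorial]
    exact Gamma_strictMonoOn_Ici.monotoneOn (Set.mem_Ici.2 (by linarith)) (Set.mem_Ici.2 hx)
      (by linarith)
  have htangent := sub_mul_log_le_stirlingLead_sub (p := x) (q := m) (by linarith) (by linarith)
  have hlog : (x - m) * log x ≤ 2 * log x :=
    mul_le_mul_of_nonneg_right (by linarith) (log_nonneg (by linarith))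
  have := log_le_log (by positivity) hGamma
  linarith [stirlingLead_le_log_factorial m]

lemma isLittleO_log_Gamma_sub_stirlingLead :
    (fun x => log (Gamma x) - stirlingLead x) =o[atTop] id := by
  have hbound : (fun x => log (Gamma x) - stirlingLead x) =O[atTop] fun x => 2 * log x + 2 := by
    refine IsBigO.of_bound 1 ?_
    filter_upwards [eventually_ge_atTop 2] with x hx
    have hlog := log_nonneg (by linarith : (1 : ℝ) ≤ x)
    have hpos : (0 : ℝ) ≤ 2 * log x + 2 := by linarith
    rw [Real.norm_eq_abs, Real.norm_eq_abs, one_mul, abs_of_nonneg hpos, abs_le]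
    constructor <;> linarith [log_Gamma_le hx, le_log_Gamma hx]
  exact hbound.trans_isLittleO
    ((isLittleO_log_id_atTop.const_mul_left 2).add (isLittleO_const_id_atTop 2))

lemma tendsto_atTop_of_tendsto_div {u : ℝ → ℝ} {c : ℝ} (hc : 0 < c)
    (hu : Tendsto (fun t => u t / t) atTop (𝓝 c)) : Tendsto u atTop atTop := by
  refine (tendsto_id.atTop_mul_pos hc hu).congr' ?_
  filter_upwards [eventually_ne_atTop 0] with t ht
  simp only [id, mul_div_cancel₀ _ ht]

lemma tendsto_comp_div_of_isLittleO {r u : ℝ → ℝ} {c : ℝ} (hr : r =o[atTop] id) (hc : 0 < c)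
    (hu : Tendsto (fun t => u t / t) atTop (𝓝 c)) :
    Tendsto (fun t => r (u t) / t) atTop (𝓝 0) := by
  have hr_u : Tendsto (fun t => r (u t) / u t) atTop (𝓝 0) :=
    hr.tendsto_div_nhds_zero.comp (tendsto_atTop_of_tendsto_div hc hu)
  have := hr_u.mul hu
  rw [zero_mul] at this
  refine this.congr' ?_
  filter_upwards [(tendsto_atTop_of_tendsto_div hc hu).eventually_ne_atTop 0] with t ht
  field_simp

lemma mul_log_div_eq (x : ℝ) {t : ℝ} (ht : t ≠ 0) :
    x * log x / t = x / t * log (x / t) + x / t * log t := by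
  rcases eq_or_ne x 0 with rfl | hx
  · simp
  · rw [log_div hx ht]
    field_simp
    ring

/-- Homogeneity of `u log u + v log v - (u + v) log (u + v)`: the `log t` terms cancel. -/
lemma tendsto_mul_log_add_mul_log_sub_div {u v : ℝ → ℝ} {a b : ℝ}
    (hu : Tendsto (fun t => u t / t) atTop (𝓝 a)) (hv : Tendsto (fun t => v t / t) atTop (𝓝 b)) :
    Tendsto (fun t => (u t * log (u t) + v t * log (v t) - (u t + v t) * log (u t + v t)) / t)
      atTop (𝓝 (a * log a + b * log b - (a + b) * log (a + b))) := by
  have hlim := ((continuous_mul_log.tendsto a).comp hu).add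
    ((continuous_mul_log.tendsto b).comp hv) |>.sub
    ((continuous_mul_log.tendsto (a + b)).comp (hu.add hv))
  refine hlim.congr' ?_
  filter_upwards [eventually_ne_atTop 0] with t ht
  simp only [Function.comp_apply, sub_div, add_div _ _ t, mul_log_div_eq _ ht]
  ring

theorem log_Etilde_growth_rate_general (α β a b : ℝ)
    (ha : 0 < a) (hb : 0 < b)
    (NA NB : ℝ → ℝ)
    (hNAlim : Filter.Tendsto (fun t : ℝ => NA t / t) Filter.atTop (nhds a))
    (hNBlim : Filter.Tendsto (fun t : ℝ => NB t / t) Filter.atTop (nhds b)) :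
    Filter.Tendsto
      (fun t : ℝ =>
        (Real.log (Real.Gamma (NA t + β)) + Real.log (Real.Gamma (NB t + α))
            - Real.log (Real.Gamma (NA t + NB t + α + β))
            - Real.log (Real.Gamma α * Real.Gamma β / Real.Gamma (α + β))
            + (NA t + NB t) * Real.log 2) / t)
      Filter.atTop
      (nhds (a * Real.log (2 * a / (a + b)) + b * Real.log (2 * b / (a + b)))) := by
  set C := log (Gamma α * Gamma β / Gamma (α + β))
  have hconst (k : ℝ) : Tendsto (fun t : ℝ => k / t) atTop (𝓝 0) :=
    tendsto_const_nhds.div_atTop tendsto_id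
  have hu : Tendsto (fun t => (NA t + β) / t) atTop (𝓝 a) := by
    simpa only [add_div, add_zero] using hNAlim.add (hconst β)
  have hv : Tendsto (fun t => (NB t + α) / t) atTop (𝓝 b) := by
    simpa only [add_div, add_zero] using hNBlim.add (hconst α)
  have hw : Tendsto (fun t => (NA t + β + (NB t + α)) / t) atTop (𝓝 (a + b)) := by
    simpa only [add_div] using hu.add hv
  have hr := isLittleO_log_Gamma_sub_stirlingLead
  have hlim := ((((tendsto_comp_div_of_isLittleO hr ha hu).add
    (tendsto_comp_div_of_isLittleO hr hb hv)).sub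
    (tendsto_comp_div_of_isLittleO hr (add_pos ha hb) hw)).add
    (tendsto_mul_log_add_mul_log_sub_div hu hv)).sub (hconst C) |>.add
    ((hNAlim.add hNBlim).mul_const (log 2))
  have hval : 0 + 0 - 0 + (a * log a + b * log b - (a + b) * log (a + b)) - 0 + (a + b) * log 2
      = a * log (2 * a / (a + b)) + b * log (2 * b / (a + b)) := by
    rw [log_div (by positivity) (by positivity), log_div (by positivity) (by positivity),
      log_mul two_ne_zero ha.ne', log_mul two_ne_zero hb.ne']
    ring
  rw [← hval]
  refine hlim.congr fun t => ?_
  rw [show NA t + NB t + α + β = NA t + β + (NB t + α) by ring]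
  simp only [stirlingLead]
  ring

/-- Asymptotic growth rate of the Beta-mixture e-process of Lindon et al.: with
`B(α,β) = Γ(α)Γ(β)/Γ(α+β)`, if `N_A(t)/t → a` and `N_B(t)/t → b`, then
`(log Ẽ(t))/t → a log(2a/(a+b)) + b log(2b/(a+b))`. -/
theorem log_Etilde_growth_rate (α β a b : ℝ) (hα : 0 < α) (hβ : 0 < β)
    (ha : 0 < a) (hb : 0 < b)
    (NA NB : ℝ → ℝ) (hNA : ∀ t : ℝ, 0 ≤ NA t) (hNB : ∀ t : ℝ, 0 ≤ NB t)
    (hNAlim : Filter.Tendsto (fun t : ℝ => NA t / t) Filter.atTop (nhds a))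
    (hNBlim : Filter.Tendsto (fun t : ℝ => NB t / t) Filter.atTop (nhds b)) :
    Filter.Tendsto
      (fun t : ℝ =>
        (Real.log (Real.Gamma (NA t + β)) + Real.log (Real.Gamma (NB t + α))
            - Real.log (Real.Gamma (NA t + NB t + α + β))
            - Real.log (Real.Gamma α * Real.Gamma β / Real.Gamma (α + β))
            + (NA t + NB t) * Real.log 2) / t)
      Filter.atTop
      (nhds (a * Real.log (2 * a / (a + b)) + b * Real.log (2 * b / (a + b)))) :=
  log_Etilde_growth_rate_general α β a b ha hb NA NB hNAlim hNBlim
end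

section
/- Fix φ > 0 and a > 0, b > 0. Let N_A : ℝ → ℝ and N_B : ℝ → ℝ be nonnegative functions with N_A(t)/t → a and N_B(t)/t → b as t → ∞. Define, for all t > 0 with N_A(t) + N_B(t) > 0, log E^A(t) = (1/2)·log(φ/(φ+t)) + (1/2)·(t/(t+φ))·Z(t)², where Z(t) = (N_B(t) − N_A(t))/√(N_B(t) + N_A(t)). Then (log E^A(t))/t → (1/2)·(b − a)²/(b + a) as t → ∞. -/
open Filter Real

private lemma log_div_self_tendsto : Tendsto (fun x : ℝ => Real.log x / x) atTop (nhds 0) :=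
  Real.isLittleO_log_id_atTop.tendsto_div_nhds_zero

/-- Asymptotic growth rate of the Gaussian-mixture (asymptotic confidence sequence)
e-process: with `Z(t) = (N_B(t) − N_A(t))/√(N_B(t) + N_A(t))`, if `N_A(t)/t → a` and
`N_B(t)/t → b`, then `(log E^A(t))/t → (1/2)(b−a)²/(b+a)`. -/
theorem log_EA_growth_rate (φ a b : ℝ) (hφ : 0 < φ) (ha : 0 < a) (hb : 0 < b)
    (NA NB : ℝ → ℝ) (hNA : ∀ t : ℝ, 0 ≤ NA t) (hNB : ∀ t : ℝ, 0 ≤ NB t)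
    (hNAlim : Filter.Tendsto (fun t : ℝ => NA t / t) Filter.atTop (nhds a))
    (hNBlim : Filter.Tendsto (fun t : ℝ => NB t / t) Filter.atTop (nhds b)) :
    Filter.Tendsto
      (fun t : ℝ =>
        ((1 / 2) * Real.log (φ / (φ + t))
            + (1 / 2) * (t / (t + φ))
              * ((NB t - NA t) / Real.sqrt (NB t + NA t)) ^ 2) / t)
      Filter.atTop
      (nhds ((1 / 2) * (b - a) ^ 2 / (b + a))) := by
  have habne : (b + a) ≠ 0 := by positivity
  -- φ/t → 0
  have hφt : Tendsto (fun t : ℝ => φ / t) atTop (nhds 0) :=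
    tendsto_const_nhds.div_atTop tendsto_id
  -- t/(t+φ) → 1
  have hfrac : Tendsto (fun t : ℝ => t / (t + φ)) atTop (nhds 1) := by
    have h1 : Tendsto (fun t : ℝ => (1 + φ / t)⁻¹) atTop (nhds 1) := by
      have := (tendsto_const_nhds.add hφt :
        Tendsto (fun t : ℝ => 1 + φ / t) atTop (nhds (1 + 0))).inv₀ (by norm_num)
      simpa using this
    refine h1.congr' ?_
    filter_upwards [eventually_gt_atTop 0] with t ht
    have e : (1:ℝ) + φ / t = (t + φ) / t := by field_simp
    rw [e, inv_div]
  -- (1/2) * log(φ/(φ+t)) / t → 0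
  have hlog : Tendsto (fun t : ℝ => (1 / 2) * Real.log (φ / (φ + t)) / t) atTop (nhds 0) := by
    have hlogt : Tendsto (fun t : ℝ => Real.log (φ + t) / t) atTop (nhds 0) := by
      have hcomp : Tendsto (fun t : ℝ => Real.log (φ + t) / (φ + t)) atTop (nhds 0) :=
        log_div_self_tendsto.comp (tendsto_atTop_add_const_left _ φ tendsto_id)
      have hr : Tendsto (fun t : ℝ => (φ + t) / t) atTop (nhds 1) := by
        have := (hφt.add (tendsto_const_nhds : Tendsto (fun _ : ℝ => (1:ℝ)) atTop (nhds 1)))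
        rw [zero_add] at this
        refine this.congr' ?_
        filter_upwards [eventually_ne_atTop 0] with t ht
        field_simp
      have := hcomp.mul hr
      rw [zero_mul] at this
      refine this.congr' ?_
      filter_upwards [eventually_gt_atTop 0] with t ht
      have hne : φ + t ≠ 0 := by positivity
      rw [div_mul_div_comm, mul_comm (Real.log (φ + t)) (φ + t), mul_div_mul_left _ _ hne]
    have hcφ : Tendsto (fun t : ℝ => Real.log φ / t) atTop (nhds 0) :=
      tendsto_const_nhds.div_atTop tendsto_id
    have := ((hcφ.sub hlogt).const_mul (1/2 : ℝ))
    rw [sub_zero, mul_zero] at this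
    refine this.congr' ?_
    filter_upwards [eventually_gt_atTop 0] with t ht
    rw [Real.log_div hφ.ne' (by positivity)]
    ring
  -- second term limit
  have hdiff : Tendsto (fun t : ℝ => (NB t / t - NA t / t) ^ 2) atTop (nhds ((b - a) ^ 2)) :=
    (hNBlim.sub hNAlim).pow 2
  have hsum : Tendsto (fun t : ℝ => NB t / t + NA t / t) atTop (nhds (b + a)) :=
    hNBlim.add hNAlim
  have hterm2 : Tendsto
      (fun t : ℝ => (1 / 2) * (t / (t + φ)) *
        ((NB t / t - NA t / t) ^ 2 / (NB t / t + NA t / t))) atTop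
      (nhds ((1 / 2) * 1 * ((b - a) ^ 2 / (b + a)))) :=
    ((tendsto_const_nhds.mul hfrac).mul (hdiff.div hsum habne))
  have hmain := hlog.add hterm2
  rw [zero_add] at hmain
  have hval : (1 / 2 : ℝ) * 1 * ((b - a) ^ 2 / (b + a)) = (1 / 2) * (b - a) ^ 2 / (b + a) := by
    ring
  rw [hval] at hmain
  refine hmain.congr' ?_
  filter_upwards [eventually_gt_atTop 0] with t ht
  have hS : (0 : ℝ) ≤ NB t + NA t := add_nonneg (hNB t) (hNA t)
  have hZ : ((NB t - NA t) / Real.sqrt (NB t + NA t)) ^ 2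
      = (NB t - NA t) ^ 2 / (NB t + NA t) := by
    rw [div_pow, Real.sq_sqrt hS]
  rw [hZ, add_div]
  rcases eq_or_lt_of_le hS with h0 | hpos
  · have hB0 : NB t = 0 := by nlinarith [hNB t, hNA t]
    have hA0 : NA t = 0 := by nlinarith [hNB t, hNA t]
    simp [hB0, hA0, mul_div_assoc]
  · rw [mul_div_assoc]
    congr 1
    field_simp
end

section
/- For all reals a > 0 and b > 0, (1/2)·(b − a)²/(a + b) ≤ a·log(2a/(a+b)) + b·log(2b/(a+b)), with strict inequality whenever a ≠ b. In words: the asymptotic growth rate of the Gaussian-approximation e-process is at most (and, off the null, strictly less than) the asymptotic growth rate of the exact Poisson e-process. -/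
open Real Set

/-! Put `a = m (1 + t)`, `b = m (1 - t)` with `m = (a + b) / 2` and `|t| < 1`. Then the Gaussian rate
is `m t²` and the Poisson rate is `m ((1 + t) log (1 + t) + (1 - t) log (1 - t))`. The difference of
the latter bracket and `t² + t⁴ / 6` is even, vanishes at `0` and has second derivative
`2 t⁴ / (1 - t²) ≥ 0`; being convex, it is nonnegative. The margin `t⁴ / 6` gives strictness. -/

theorem ConvexOn.apply_zero_le_of_even {E : Type*} [AddCommGroup E] [Module ℝ E] {s : Set E}
    {f : E → ℝ} (hf : ConvexOn ℝ s f) (heven : f.Even) {x : E} (hx : x ∈ s)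
    (hnx : -x ∈ s) : f 0 ≤ f x := by
  have := hf.2 hx hnx (by norm_num : (0 : ℝ) ≤ 1 / 2) (by norm_num : (0 : ℝ) ≤ 1 / 2)
    (by norm_num)
  rw [smul_neg, add_neg_cancel, heven, smul_eq_mul] at this
  linarith

theorem hasDerivAt_mul_log_one_add_add_mul_log_one_sub {t : ℝ} (ht : t ∈ Ioo (-1 : ℝ) 1) :
    HasDerivAt (fun t ↦ (1 + t) * log (1 + t) + (1 - t) * log (1 - t))
      (log (1 + t) - log (1 - t)) t := by
  have h₁ := (hasDerivAt_mul_log (x := 1 + t) (by linarith [ht.1])).comp t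
    ((hasDerivAt_id' t).const_add 1)
  have h₂ := (hasDerivAt_mul_log (x := 1 - t) (by linarith [ht.2])).comp t
    ((hasDerivAt_id' t).const_sub 1)
  exact (h₁.add h₂).congr_deriv (by ring)

theorem hasDerivAt_log_one_add_sub_log_one_sub {t : ℝ} (ht : t ∈ Ioo (-1 : ℝ) 1) :
    HasDerivAt (fun t ↦ log (1 + t) - log (1 - t)) (1 / (1 + t) + 1 / (1 - t)) t := by
  have h₁ := ((hasDerivAt_id' t).const_add 1).log (by linarith [ht.1])
  have h₂ := ((hasDerivAt_id' t).const_sub 1).log (by linarith [ht.2])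
  exact (h₁.sub h₂).congr_deriv (by ring)

theorem convexOn_mul_log_one_add_add_mul_log_one_sub_sub :
    ConvexOn ℝ (Ioo (-1 : ℝ) 1) fun t ↦
      (1 + t) * log (1 + t) + (1 - t) * log (1 - t) - t ^ 2 - t ^ 4 / 6 := by
  have hf' {t : ℝ} (ht : t ∈ Ioo (-1 : ℝ) 1) : HasDerivAt
      (fun t ↦ (1 + t) * log (1 + t) + (1 - t) * log (1 - t) - t ^ 2 - t ^ 4 / 6)
      (log (1 + t) - log (1 - t) - 2 * t - 2 * t ^ 3 / 3) t :=
    (((hasDerivAt_mul_log_one_add_add_mul_log_one_sub ht).sub (hasDerivAt_pow 2 t)).sub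
      ((hasDerivAt_pow 4 t).div_const 6)).congr_deriv (by ring)
  have hf'' {t : ℝ} (ht : t ∈ Ioo (-1 : ℝ) 1) : HasDerivAt
      (fun t ↦ log (1 + t) - log (1 - t) - 2 * t - 2 * t ^ 3 / 3)
      (1 / (1 + t) + 1 / (1 - t) - 2 - 2 * t ^ 2) t :=
    (((hasDerivAt_log_one_add_sub_log_one_sub ht).sub ((hasDerivAt_id' t).const_mul 2)).sub
      (((hasDerivAt_pow 3 t).const_mul 2).div_const 3)).congr_deriv (by ring)
  refine convexOn_of_hasDerivWithinAt2_nonneg (convex_Ioo _ _)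
    (fun t ht ↦ (hf' ht).continuousAt.continuousWithinAt)
    (fun t ht ↦ (hf' (interior_subset ht)).hasDerivWithinAt)
    (fun t ht ↦ (hf'' (interior_subset ht)).hasDerivWithinAt) fun t ht ↦ ?_
  rw [interior_Ioo] at ht
  have h₁ : 0 < 1 + t := by linarith [ht.1]
  have h₂ : 0 < 1 - t := by linarith [ht.2]
  have : 1 / (1 + t) + 1 / (1 - t) - 2 - 2 * t ^ 2 = 2 * t ^ 4 / ((1 + t) * (1 - t)) := by
    field_simp; ring
  rw [this]
  positivity

theorem sq_add_pow_four_div_six_le_mul_log_one_add_add_mul_log_one_sub {t : ℝ}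
    (ht : t ∈ Ioo (-1 : ℝ) 1) :
    t ^ 2 + t ^ 4 / 6 ≤ (1 + t) * log (1 + t) + (1 - t) * log (1 - t) := by
  have := convexOn_mul_log_one_add_add_mul_log_one_sub_sub.apply_zero_le_of_even
    (fun t ↦ by ring_nf) ht ⟨by linarith [ht.2], by linarith [ht.1]⟩
  norm_num at this
  linarith

/-- The growth rate of the Gaussian-approximation e-process, `(1/2)(b−a)²/(a+b)`, is at
most the growth rate of the exact Poisson e-process, `a log(2a/(a+b)) + b log(2b/(a+b))`,
with strict inequality whenever `a ≠ b`. -/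
theorem gaussian_rate_le_poisson_rate (a b : ℝ) (ha : 0 < a) (hb : 0 < b) :
    (1 / 2) * (b - a) ^ 2 / (a + b)
        ≤ a * Real.log (2 * a / (a + b)) + b * Real.log (2 * b / (a + b)) ∧
      (a ≠ b →
        (1 / 2) * (b - a) ^ 2 / (a + b)
          < a * Real.log (2 * a / (a + b)) + b * Real.log (2 * b / (a + b))) := by
  have hs : 0 < a + b := by linarith
  obtain ⟨t, ht⟩ : ∃ t, t = (a - b) / (a + b) := ⟨_, rfl⟩
  have ht_mem : t ∈ Ioo (-1 : ℝ) 1 := by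
    constructor
    · rw [ht, lt_div_iff₀ hs]; linarith
    · rw [ht, div_lt_iff₀ hs]; linarith
  have ha' : a = (a + b) / 2 * (1 + t) := by rw [ht]; field_simp; ring
  have hb' : b = (a + b) / 2 * (1 - t) := by rw [ht]; field_simp; ring
  have hgauss : (1 / 2) * (b - a) ^ 2 / (a + b) = (a + b) / 2 * t ^ 2 := by
    rw [ht]; field_simp; ring
  have hpoisson : a * log (2 * a / (a + b)) + b * log (2 * b / (a + b))
      = (a + b) / 2 * ((1 + t) * log (1 + t) + (1 - t) * log (1 - t)) := by
    rw [show 2 * a / (a + b) = 1 + t by rw [ht]; field_simp; ring,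
      show 2 * b / (a + b) = 1 - t by rw [ht]; field_simp; ring]
    linear_combination log (1 + t) * ha' + log (1 - t) * hb'
  have hkey := sq_add_pow_four_div_six_le_mul_log_one_add_add_mul_log_one_sub ht_mem
  rw [hgauss, hpoisson]
  refine ⟨by gcongr; linarith [pow_nonneg (sq_nonneg t) 2], fun hab ↦ ?_⟩
  have ht0 : t ≠ 0 := by rw [ht]; exact div_ne_zero (sub_ne_zero.mpr hab) hs.ne'
  gcongr
  linarith [pow_pos (sq_pos_of_ne_zero ht0) 2]
end

section
/- Fix φ > 0 and reals n_A ≥ 0, n_B ≥ 0. For w ∈ ℝ define a = n_A²/4 + n_A·n_B/2 + n_A·φ + n_A·w and b = n_B²/4 + n_B·φ − n_B·w + φ² + w². Then a + b > 0, and h(w) := (n_A + n_B)/2 − φ + √(a + b) is the unique real v satisfying both 2φ + v + w > 0 and 2φ + v − w > 0 and the stationarity equation 1 − (φ + n_B)/(2φ + v + w) − (φ + n_A)/(2φ + v − w) = 0. -/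
/-!
Write `x = 2φ + v + w`, `y = 2φ + v - w`, `α = φ + n_A`, `β = φ + n_B`. For positive `x, y`
the stationarity equation is the hyperbola `(x - β)(y - α) = αβ`, and positivity of `x, y`
selects its branch `x > β, y > α`. In the centred coordinates `u = v + φ - (n_A + n_B)/2` and
`d = w + (n_A - n_B)/2` this branch reads `u² = d² + αβ, u > |d|`, whose only point is
`u = √(d² + αβ)`; the quantity `a + b` of the statement is `d² + αβ`.
-/

theorem one_sub_div_sub_div_eq_zero_iff {α β x y : ℝ} (hα : 0 < α) (hβ : 0 < β) :
    (0 < x ∧ 0 < y ∧ 1 - β / x - α / y = 0) ↔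
      0 < x - β ∧ 0 < y - α ∧ (x - β) * (y - α) = α * β := by
  constructor
  · rintro ⟨hx, hy, h⟩
    have hxy : x * y = β * y + α * x := by
      field_simp at h
      linarith
    have hprod : (x - β) * (y - α) = α * β := by linear_combination hxy
    -- On the other branch `x < β, y < α` one would get `βy + αx > 2xy`.
    have hβx : β < x := by
      by_contra! hxβ
      have hyα : y < α := by nlinarith [mul_pos hα hβ]
      nlinarith [mul_lt_mul_of_pos_left hyα hx, mul_le_mul_of_nonneg_right hxβ hy.le]
    have hαy : α < y := by nlinarith [mul_pos hα hβ]
    exact ⟨by linarith, by linarith, hprod⟩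
  · rintro ⟨hx, hy, h⟩
    have hx' : 0 < x := by linarith
    have hy' : 0 < y := by linarith
    refine ⟨hx', hy', ?_⟩
    field_simp
    linear_combination h

theorem eq_sqrt_sq_add_iff {c d u : ℝ} (hc : 0 < c) :
    (0 < u + d ∧ 0 < u - d ∧ (u + d) * (u - d) = c) ↔ u = √(d ^ 2 + c) := by
  constructor
  · rintro ⟨h₁, h₂, h⟩
    rw [eq_comm, Real.sqrt_eq_iff_mul_self_eq_of_pos (by linarith)]
    linear_combination h
  · rintro rfl
    have hd : |d| < √(d ^ 2 + c) := abs_lt_of_sq_lt_sq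
      (by rw [Real.sq_sqrt (by positivity)]; linarith) (Real.sqrt_nonneg _)
    refine ⟨by linarith [neg_abs_le d], by linarith [le_abs_self d], ?_⟩
    linear_combination Real.sq_sqrt (by positivity : 0 ≤ d ^ 2 + c)

/-- With `a = n_A²/4 + n_A n_B/2 + n_A φ + n_A w` and
`b = n_B²/4 + n_B φ − n_B w + φ² + w²`, we have `a + b > 0`, and
`h(w) = (n_A + n_B)/2 − φ + √(a + b)` is the unique real `v` satisfying
`2φ + v + w > 0`, `2φ + v − w > 0`, and the stationarity equation
`1 − (φ + n_B)/(2φ + v + w) − (φ + n_A)/(2φ + v − w) = 0`. -/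
theorem stationarity_unique_solution (φ nA nB : ℝ) (hφ : 0 < φ)
    (hA : 0 ≤ nA) (hB : 0 ≤ nB) (w : ℝ) :
    0 < (nA ^ 2 / 4 + nA * nB / 2 + nA * φ + nA * w)
        + (nB ^ 2 / 4 + nB * φ - nB * w + φ ^ 2 + w ^ 2) ∧
      ∀ v : ℝ,
        (0 < 2 * φ + v + w ∧ 0 < 2 * φ + v - w ∧
            1 - (φ + nB) / (2 * φ + v + w) - (φ + nA) / (2 * φ + v - w) = 0)
          ↔ v = (nA + nB) / 2 - φ +
              Real.sqrt ((nA ^ 2 / 4 + nA * nB / 2 + nA * φ + nA * w)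
                + (nB ^ 2 / 4 + nB * φ - nB * w + φ ^ 2 + w ^ 2)) := by
  have hα : 0 < φ + nA := by linarith
  have hβ : 0 < φ + nB := by linarith
  set d := w + (nA - nB) / 2
  have hdisc : (nA ^ 2 / 4 + nA * nB / 2 + nA * φ + nA * w)
      + (nB ^ 2 / 4 + nB * φ - nB * w + φ ^ 2 + w ^ 2) = d ^ 2 + (φ + nA) * (φ + nB) := by ring
  rw [hdisc]
  refine ⟨by positivity, fun v => ?_⟩
  set u := v - ((nA + nB) / 2 - φ)
  have hx : 2 * φ + v + w - (φ + nB) = u + d := by ring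
  have hy : 2 * φ + v - w - (φ + nA) = u - d := by ring
  rw [one_sub_div_sub_div_eq_zero_iff hα hβ, hx, hy, eq_sqrt_sq_add_iff (mul_pos hα hβ),
    ← sub_eq_iff_eq_add']
end
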